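/- arXiv:1507.02769 — 2 statements merged into one kernel-verified Lean document; each statement's English description precedes it below -/
import Mathlib

section
/- For a categorical random variable X on {1,...,N} with P(X=k;θ) = p_k(θ), let I₁ ∪ ... ∪ I_r be the maximal partition of {1,...,N} such that the subspaces L_j = span{p_k : k ∈ I_j} are linearly independent. Then a statistic ĝ(X) is a UMVUE if and only if ĝ is constant on each element I_j of the partition. -/
/-- The block of index `j` of the partition of `{1,...,N}` given by `part`. -/
def block {N r : ℕ} (part : Fin N → Fin r) (j : Fin r) : Finset (Fin N) :=
  Finset.univ.filter fun k => part k = j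

/-- The subspaces `L_j = span{p_k : k ∈ I_j}` (as functions of `θ`) are linearly
independent: any linear combination of the `p_k` vanishing identically in `θ` has all
its block-wise parts vanishing identically. -/
def IndepPartition {N r : ℕ} {Θ : Type*} (p : Θ → Fin N → ℝ) (part : Fin N → Fin r) : Prop :=
  ∀ f : Fin N → ℝ, (∀ θ, ∑ k, f k * p θ k = 0) →
    ∀ j : Fin r, ∀ θ, ∑ k ∈ block part j, f k * p θ k = 0

/-- The partition is maximal: no block can be split into two nonempty parts while
preserving the linear independence of the spans. -/
def MaximalPartition {N r : ℕ} {Θ : Type*} (p : Θ → Fin N → ℝ) (part : Fin N → Fin r) : Prop :=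
  ∀ (j : Fin r) (S : Finset (Fin N)), S ⊆ block part j → S.Nonempty →
    (block part j \ S).Nonempty →
    ∃ f : Fin N → ℝ, (∀ θ, ∑ k, f k * p θ k = 0) ∧ ∃ θ, ∑ k ∈ S, f k * p θ k ≠ 0

/-- `g` is a UMVUE in the categorical model with pmf `p`: it is uncorrelated under
every `θ` with every unbiased estimator of zero. -/
def IsUMVUECat {N : ℕ} {Θ : Type*} (p : Θ → Fin N → ℝ) (g : Fin N → ℝ) : Prop :=
  ∀ χ : Fin N → ℝ, (∀ θ, ∑ k, χ k * p θ k = 0) → ∀ θ, ∑ k, g k * χ k * p θ k = 0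

/-!
The unbiased estimators of zero form a subspace `Z`, and `ĝ` is a UMVUE exactly when `Z` is
stable under multiplication by `ĝ`, hence by `q ∘ ĝ` for every polynomial `q`. If `ĝ` is constant
on each block, linear independence of the `L_j` splits every `χ ∈ Z` blockwise and `ĝ` factors
out of each block. Conversely, multiplying `χ ∈ Z` by a Lagrange polynomial in `ĝ` that is `1` at
the value `c` and `0` at the other values of `ĝ` on a block `I_j` and using independence shows
that the level set `{k ∈ I_j | ĝ k = c}` splits `I_j` compatibly with independence; maximality
then forces it to be all of `I_j`.
-/

open Finset Polynomial

section

variable {N r : ℕ} {Θ : Type*}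

def zeroEstimators (p : Θ → Fin N → ℝ) : Submodule ℝ (Fin N → ℝ) where
  carrier := {χ | ∀ θ, ∑ k, χ k * p θ k = 0}
  add_mem' {χ ψ} hχ hψ θ := by simp [add_mul, sum_add_distrib, hχ θ, hψ θ]
  zero_mem' θ := by simp
  smul_mem' a χ hχ θ := by simp [mul_assoc, ← mul_sum, hχ θ]

lemma isUMVUECat_iff_mul_mem {p : Θ → Fin N → ℝ} {g : Fin N → ℝ} :
    IsUMVUECat p g ↔ ∀ χ ∈ zeroEstimators p, g * χ ∈ zeroEstimators p :=
  Iff.rfl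

@[simp]
lemma mem_block {part : Fin N → Fin r} {j : Fin r} {k : Fin N} : k ∈ block part j ↔ part k = j := by
  simp [block]

lemma sum_sum_block {M : Type*} [AddCommMonoid M] (part : Fin N → Fin r) (f : Fin N → M) :
    ∑ j, ∑ k ∈ block part j, f k = ∑ k, f k :=
  sum_fiberwise univ part f

namespace IsUMVUECat

variable {p : Θ → Fin N → ℝ} {g χ : Fin N → ℝ}

lemma eval_mul_mem (hg : IsUMVUECat p g) (hχ : χ ∈ zeroEstimators p) (q : ℝ[X]) :
    (fun k => q.eval (g k)) * χ ∈ zeroEstimators p := by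
  induction q using Polynomial.induction_on with
  | C a =>
    convert (zeroEstimators p).smul_mem a hχ using 1
    ext k
    simp
  | add q q' hq hq' =>
    convert add_mem hq hq' using 1
    ext k
    simp [add_mul]
  | monomial n a ih =>
    convert isUMVUECat_iff_mul_mem.1 hg _ ih using 1
    ext k
    simp only [Pi.mul_apply, eval_mul, eval_C, eval_pow, eval_X]
    ring

lemma sum_level_set_eq_zero {part : Fin N → Fin r} (hindep : IndepPartition p part)
    (hg : IsUMVUECat p g) (hχ : χ ∈ zeroEstimators p) (j : Fin r) (c : ℝ) (θ : Θ) :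
    ∑ k ∈ block part j with g k = c, χ k * p θ k = 0 := by
  set q := Lagrange.basis (insert c ((block part j).image g)) id c
  have hqc : q.eval c = 1 :=
    Lagrange.eval_basis_self (Set.injOn_id _) (mem_insert_self _ _)
  have hq : ∀ k ∈ block part j, g k ≠ c → q.eval (g k) = 0 := fun k hk hne =>
    Lagrange.eval_basis_of_ne (v := id) hne.symm (mem_insert_of_mem (mem_image_of_mem g hk))
  have hblock := hindep _ (hg.eval_mul_mem hχ q) j θ
  simp only [Pi.mul_apply] at hblock
  have hlevel : ∑ k ∈ block part j with g k = c, q.eval (g k) * χ k * p θ k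
      = ∑ k ∈ block part j with g k = c, χ k * p θ k :=
    sum_congr rfl fun k hk => by rw [(mem_filter.1 hk).2, hqc, one_mul]
  have hrest : ∑ k ∈ block part j with ¬g k = c, q.eval (g k) * χ k * p θ k = 0 :=
    sum_eq_zero fun k hk => by
      rw [hq k (mem_filter.1 hk).1 (mem_filter.1 hk).2, zero_mul, zero_mul]
  rwa [← sum_filter_add_sum_filter_not _ (fun k => g k = c), hrest, add_zero, hlevel] at hblock

lemma eq_of_part_eq {part : Fin N → Fin r} (hindep : IndepPartition p part)
    (hmax : MaximalPartition p part) (hg : IsUMVUECat p g) {k l : Fin N}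
    (hkl : part k = part l) : g k = g l := by
  by_contra hne
  obtain ⟨f, hf, θ, hθ⟩ := hmax (part k) {i ∈ block part (part k) | g i = g k}
    (filter_subset _ _) ⟨k, by simp⟩ ⟨l, by simp [hkl, Ne.symm hne]⟩
  exact hθ (hg.sum_level_set_eq_zero hindep hf _ _ θ)

end IsUMVUECat

lemma isUMVUECat_of_forall_part_eq {p : Θ → Fin N → ℝ} {part : Fin N → Fin r}
    {g : Fin N → ℝ} (hindep : IndepPartition p part)
    (hconst : ∀ k l, part k = part l → g k = g l) : IsUMVUECat p g := by
  intro χ hχ θ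
  rw [← sum_sum_block part]
  refine sum_eq_zero fun j _ => ?_
  obtain hempty | ⟨k₀, hk₀⟩ := (block part j).eq_empty_or_nonempty
  · simp [hempty]
  calc ∑ k ∈ block part j, g k * χ k * p θ k
      = g k₀ * ∑ k ∈ block part j, χ k * p θ k := by
        rw [mul_sum]
        refine sum_congr rfl fun k hk => ?_
        rw [hconst k k₀ ((mem_block.1 hk).trans (mem_block.1 hk₀).symm), mul_assoc]
    _ = 0 := by rw [hindep χ hχ j θ, mul_zero]

end

theorem stmt15_general {N r : ℕ} {Θ : Type*} (p : Θ → Fin N → ℝ)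
    (part : Fin N → Fin r)
    (hindep : IndepPartition p part) (hmax : MaximalPartition p part) :
    ∀ g : Fin N → ℝ, IsUMVUECat p g ↔ ∀ k l, part k = part l → g k = g l :=
  fun _ => ⟨fun hg _ _ => hg.eq_of_part_eq hindep hmax, isUMVUECat_of_forall_part_eq hindep⟩

theorem stmt15 {N r : ℕ} {Θ : Type*} (p : Θ → Fin N → ℝ)
    (hpos : ∀ θ k, 0 < p θ k) (hsum : ∀ θ, ∑ k, p θ k = 1)
    (part : Fin N → Fin r) (hsurj : Function.Surjective part)
    (hindep : IndepPartition p part) (hmax : MaximalPartition p part) :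
    ∀ g : Fin N → ℝ, IsUMVUECat p g ↔ ∀ k l, part k = part l → g k = g l :=
  stmt15_general p part hindep hmax
end

section
/- In the categorical model, if the maximal partition into linearly independent spans is I₁, ..., I_r, then the parametric functions admitting UMVUEs are exactly the elements of span{π₁(θ), ..., π_r(θ)} where π_j(θ) = Σ_{k ∈ I_j} p_k(θ). -/
theorem stmt16 {N r : ℕ} {Θ : Type*} (p : Θ → Fin N → ℝ)
    (hpos : ∀ θ k, 0 < p θ k) (hsum : ∀ θ, ∑ k, p θ k = 1)
    (part : Fin N → Fin r) (hsurj : Function.Surjective part)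
    (hindep : IndepPartition p part) (hmax : MaximalPartition p part) :
    ∀ G : Θ → ℝ,
      (∃ g : Fin N → ℝ, IsUMVUECat p g ∧ ∀ θ, ∑ k, g k * p θ k = G θ) ↔
      ∃ w : Fin r → ℝ, ∀ θ, G θ = ∑ j, w j * ∑ k ∈ block part j, p θ k := by
  classical
  intro G
  constructor
  · rintro ⟨g, hg, hgG⟩
    -- g is constant on each block
    have hconst : ∀ j : Fin r, ∀ k₁ ∈ block part j, ∀ k₂ ∈ block part j, g k₁ = g k₂ := by
      intro j k₁ hk₁ k₂ hk₂
      by_contra hne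
      set a := g k₁ with ha
      set S := (block part j).filter (fun k => g k = a) with hS
      have hSsub : S ⊆ block part j := Finset.filter_subset _ _
      have hSne : S.Nonempty := ⟨k₁, Finset.mem_filter.mpr ⟨hk₁, rfl⟩⟩
      have hcne : (block part j \ S).Nonempty := by
        refine ⟨k₂, Finset.mem_sdiff.mpr ⟨hk₂, ?_⟩⟩
        simp only [hS, Finset.mem_filter]
        exact fun h => hne h.2.symm
      obtain ⟨f, hf0, θ₀, hθ₀⟩ := hmax j S hSsub hSne hcne
      -- for any finset W of reals, the product polynomial times f is unbiased zero
      have hprod : ∀ (W : Finset ℝ), ∀ θ,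
          ∑ k, ((∏ v ∈ W, (g k - v)) * f k) * p θ k = 0 := by
        intro W
        induction W using Finset.induction_on with
        | empty => intro θ; simpa using hf0 θ
        | @insert w W hw ih =>
          intro θ
          have h1 : ∑ k, g k * ((∏ v ∈ W, (g k - v)) * f k) * p θ k = 0 :=
            hg (fun k => (∏ v ∈ W, (g k - v)) * f k) ih θ
          have key : ∀ k : Fin N, ((∏ v ∈ insert w W, (g k - v)) * f k) * p θ k
              = g k * ((∏ v ∈ W, (g k - v)) * f k) * p θ k
                - w * (((∏ v ∈ W, (g k - v)) * f k) * p θ k) := by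
            intro k
            rw [Finset.prod_insert hw]; ring
          calc ∑ k, ((∏ v ∈ insert w W, (g k - v)) * f k) * p θ k
              = ∑ k, (g k * ((∏ v ∈ W, (g k - v)) * f k) * p θ k
                - w * (((∏ v ∈ W, (g k - v)) * f k) * p θ k)) := by
                exact Finset.sum_congr rfl fun k _ => key k
            _ = 0 := by
                rw [Finset.sum_sub_distrib, h1, ← Finset.mul_sum, ih θ, mul_zero, sub_zero]
      set T := (block part j).image g with hT
      set W := T.erase a with hW
      have hblock := hindep (fun k => (∏ v ∈ W, (g k - v)) * f k) (hprod W) j θ₀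
      -- split the block sum
      set d := ∏ v ∈ W, (a - v) with hd
      have hdne : d ≠ 0 := by
        rw [hd]
        exact Finset.prod_ne_zero_iff.mpr fun v hv => sub_ne_zero_of_ne (Ne.symm (Finset.ne_of_mem_erase hv))
      have hsplit : ∑ k ∈ block part j, ((∏ v ∈ W, (g k - v)) * f k) * p θ₀ k
          = ∑ k ∈ block part j \ S, ((∏ v ∈ W, (g k - v)) * f k) * p θ₀ k
            + ∑ k ∈ S, ((∏ v ∈ W, (g k - v)) * f k) * p θ₀ k :=
        (Finset.sum_sdiff hSsub).symm
      have hzero : ∑ k ∈ block part j \ S, ((∏ v ∈ W, (g k - v)) * f k) * p θ₀ k = 0 := by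
        refine Finset.sum_eq_zero fun k hk => ?_
        obtain ⟨hkb, hks⟩ := Finset.mem_sdiff.mp hk
        have hgka : g k ≠ a := by
          intro h; exact hks (Finset.mem_filter.mpr ⟨hkb, h⟩)
        have hgkW : g k ∈ W := Finset.mem_erase.mpr ⟨hgka, Finset.mem_image_of_mem g hkb⟩
        rw [Finset.prod_eq_zero hgkW (by ring), zero_mul, zero_mul]
      have hSsum : ∑ k ∈ S, ((∏ v ∈ W, (g k - v)) * f k) * p θ₀ k
          = d * ∑ k ∈ S, f k * p θ₀ k := by
        rw [Finset.mul_sum]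
        refine Finset.sum_congr rfl fun k hk => ?_
        have hgk : g k = a := (Finset.mem_filter.mp hk).2
        rw [hgk, ← hd]; ring
      rw [hsplit, hzero, hSsum, zero_add] at hblock
      exact hθ₀ ((mul_eq_zero.mp hblock).resolve_left hdne)
    -- define the weights
    refine ⟨fun j => g (hsurj j).choose, fun θ => ?_⟩
    have hchoice : ∀ j : Fin r, (hsurj j).choose ∈ block part j := fun j =>
      Finset.mem_filter.mpr ⟨Finset.mem_univ _, (hsurj j).choose_spec⟩
    rw [← hgG θ, ← Finset.sum_fiberwise Finset.univ part (fun k => g k * p θ k)]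
    refine Finset.sum_congr rfl fun j _ => ?_
    rw [Finset.mul_sum]
    refine Finset.sum_congr rfl fun k hk => ?_
    rw [hconst j k hk _ (hchoice j)]
  · rintro ⟨w, hw⟩
    refine ⟨fun k => w (part k), ?_, ?_⟩
    · intro χ hχ θ
      have := hindep χ hχ
      calc ∑ k, w (part k) * χ k * p θ k
          = ∑ j, ∑ k ∈ block part j, w (part k) * χ k * p θ k :=
            (Finset.sum_fiberwise Finset.univ part _).symm
        _ = ∑ j : Fin r, w j * ∑ k ∈ block part j, χ k * p θ k := by
            refine Finset.sum_congr rfl fun j _ => ?_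
            rw [Finset.mul_sum]
            refine Finset.sum_congr rfl fun k hk => ?_
            rw [(Finset.mem_filter.mp hk).2]; ring
        _ = 0 := by
            refine Finset.sum_eq_zero fun j _ => ?_
            rw [this j θ, mul_zero]
    · intro θ
      rw [hw θ]
      calc ∑ k, w (part k) * p θ k
          = ∑ j, ∑ k ∈ block part j, w (part k) * p θ k :=
            (Finset.sum_fiberwise Finset.univ part _).symm
        _ = ∑ j : Fin r, w j * ∑ k ∈ block part j, p θ k := by
            refine Finset.sum_congr rfl fun j _ => ?_
            rw [Finset.mul_sum]
            exact Finset.sum_congr rfl fun k hk => by rw [(Finset.mem_filter.mp hk).2]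
end
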